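/- arXiv:2512.01423 — 2 statements merged into one kernel-verified Lean document; each statement's English description precedes it below -/
import Mathlib

section
/- Fix β ∈ (0,1) and h : [0,1] → [0,1]. Suppose b : [0,1] → [0,∞) satisfies E[h(P^a)·1{b(P^a)·P ≤ s}] ≤ (1-β)s for all s ∈ [0,1], for all valid p-values P and all [0,1]-valued P^a INDEPENDENT of P. Then b(x) ≥ h(x)/(1-β) for every x with h(x) > 0. Moreover b(x) = h(x)/(1-β) satisfies the constraint, so it is the pointwise smallest valid choice. -/
/-!
Taking `P` uniform on `[0,1]` and `P^a ≡ x` turns the constraint into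
`h x · ℙ(b x · P ≤ s) ≤ (1-β) s`; the choice `s = min (b x) 1` (or `s = 0` when `b x ≤ 0`)
then forces `h x ≤ (1-β) b x`. Conversely, for `b = h / (1-β)`, independence and Tonelli let us
condition on `P^a = t`, leaving `h t · ℙ(h t · P ≤ (1-β) s) ≤ (1-β) s`: this is super-uniformity
of `P` when the threshold `(1-β) s / h t` is at most `1`, and `ℙ ≤ 1` otherwise.
-/

open MeasureTheory Set ProbabilityTheory
open scoped unitInterval ENNReal

lemma integral_mul_ite_eq {Ω : Type*} [MeasurableSpace Ω] (μ : Measure Ω) (a : ℝ) {p : Ω → Prop}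
    [DecidablePred p] (hp : MeasurableSet {ω | p ω}) :
    ∫ ω, a * (if p ω then 1 else 0) ∂μ = μ.real {ω | p ω} * a := by
  rw [← smul_eq_mul, ← integral_indicator_const a hp]
  congr 1 with ω
  simp [Set.indicator_apply]

lemma unitInterval.volume_coe_le {u : ℝ} (hu : u ∈ Icc (0:ℝ) 1) :
    volume {ω : I | (ω : ℝ) ≤ u} = ENNReal.ofReal u :=
  unitInterval.volume_Iic ⟨u, hu⟩

lemma le_mul_of_forall_integral_unitInterval_le {a k c : ℝ} (ha : 0 < a)
    (hle : ∀ s ∈ Icc (0:ℝ) 1, ∫ ω : I, a * (if k * ω ≤ s then 1 else 0) ≤ c * s) :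
    a ≤ c * k := by
  rcases le_or_gt k 0 with hk | hk
  · have h0 := hle 0 ⟨le_rfl, zero_le_one⟩
    have hall : {ω : I | k * ω ≤ 0} = univ :=
      eq_univ_of_forall fun ω => mul_nonpos_of_nonpos_of_nonneg hk ω.2.1
    rw [integral_mul_ite_eq _ _ (measurableSet_le (by fun_prop) measurable_const), hall,
      probReal_univ] at h0
    linarith
  · set s := min k 1
    have hs : 0 < s := lt_min hk one_pos
    have hsk : s / k ∈ Icc (0:ℝ) 1 :=
      ⟨by positivity, (div_le_one hk).2 (min_le_left _ _)⟩
    have hset : {ω : I | k * ω ≤ s} = {ω : I | (ω : ℝ) ≤ s / k} := by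
      ext ω; simp only [mem_ofPred_eq, le_div_iff₀ hk, mul_comm]
    have h1 := hle s ⟨hs.le, min_le_right _ _⟩
    rw [integral_mul_ite_eq _ _ (measurableSet_le (by fun_prop) measurable_const), hset,
      measureReal_def, unitInterval.volume_coe_le hsk, ENNReal.toReal_ofReal hsk.1] at h1
    rw [div_mul_eq_mul_div, div_le_iff₀ hk] at h1
    nlinarith

def IsSuperUniform {Ω : Type*} [MeasurableSpace Ω] (P : Ω → ℝ) (μ : Measure Ω) : Prop :=
  ∀ s ∈ Icc (0:ℝ) 1, μ {ω | P ω ≤ s} ≤ ENNReal.ofReal s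

namespace IsSuperUniform

variable {Ω : Type*} [MeasurableSpace Ω] {μ : Measure Ω} [IsProbabilityMeasure μ] {P : Ω → ℝ}

theorem ofReal_mul_measure_le (hP : IsSuperUniform P μ) (a : ℝ) {t : ℝ} (ht : 0 ≤ t) :
    ENNReal.ofReal a * μ {ω | a * P ω ≤ t} ≤ ENNReal.ofReal t := by
  rcases le_or_gt a 0 with ha | ha
  · simp [ENNReal.ofReal_of_nonpos ha]
  have hset : {ω | a * P ω ≤ t} = {ω | P ω ≤ t / a} := by
    ext ω; simp only [mem_ofPred_eq, le_div_iff₀ ha, mul_comm]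
  rw [hset]
  rcases le_or_gt (t / a) 1 with hta | hta
  · calc ENNReal.ofReal a * μ {ω | P ω ≤ t / a}
        ≤ ENNReal.ofReal a * ENNReal.ofReal (t / a) := by
          gcongr; exact hP _ ⟨by positivity, hta⟩
      _ = ENNReal.ofReal t := by rw [← ENNReal.ofReal_mul ha.le, mul_div_cancel₀ _ ha.ne']
  · calc ENNReal.ofReal a * μ {ω | P ω ≤ t / a}
        ≤ ENNReal.ofReal a := mul_le_of_le_one_right' prob_le_one
      _ ≤ ENNReal.ofReal t := ENNReal.ofReal_le_ofReal ((one_lt_div ha).1 hta).le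

theorem lintegral_ofReal_mul_ite_le (hP : IsSuperUniform P μ) (a : ℝ) {c s : ℝ} (hc : 0 < c)
    (hs : 0 ≤ s) :
    ∫⁻ ω, ENNReal.ofReal (a * if a / c * P ω ≤ s then 1 else 0) ∂μ ≤ ENNReal.ofReal (c * s) := by
  have hset : {ω | a / c * P ω ≤ s} = {ω | a * P ω ≤ c * s} := by
    ext ω; simp only [mem_ofPred_eq, div_mul_eq_mul_div, div_le_iff₀' hc]
  calc ∫⁻ ω, ENNReal.ofReal (a * if a / c * P ω ≤ s then 1 else 0) ∂μ
      = ∫⁻ ω, {ω | a / c * P ω ≤ s}.indicator (fun _ => ENNReal.ofReal a) ω ∂μ := by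
        congr 1 with ω; simp [Set.indicator_apply, apply_ite ENNReal.ofReal]
    _ ≤ ENNReal.ofReal a * μ {ω | a * P ω ≤ c * s} := hset ▸ lintegral_indicator_const_le _ _
    _ ≤ ENNReal.ofReal (c * s) := hP.ofReal_mul_measure_le a (by positivity)

end IsSuperUniform

theorem ProbabilityTheory.IndepFun.lintegral_comp_le {Ω α β : Type*} [MeasurableSpace Ω]
    [MeasurableSpace α] [MeasurableSpace β] {μ : Measure Ω} [IsProbabilityMeasure μ]
    {X : Ω → α} {Y : Ω → β} (hXY : IndepFun X Y μ) (hX : Measurable X) (hY : Measurable Y)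
    {F : α × β → ℝ≥0∞} (hF : Measurable F) {C : ℝ≥0∞}
    (hC : ∀ ω, ∫⁻ ω', F (X ω', Y ω) ∂μ ≤ C) :
    ∫⁻ ω, F (X ω, Y ω) ∂μ ≤ C := by
  have hmap := (indepFun_iff_map_prod_eq_prod_map_map hX.aemeasurable hY.aemeasurable).1 hXY
  calc ∫⁻ ω, F (X ω, Y ω) ∂μ = ∫⁻ y, ∫⁻ x, F (x, y) ∂μ.map X ∂μ.map Y := by
        rw [← lintegral_prod_symm' _ hF, ← hmap, lintegral_map hF (hX.prodMk hY)]
    _ = ∫⁻ ω, ∫⁻ ω', F (X ω', Y ω) ∂μ ∂μ := by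
        rw [lintegral_map hF.lintegral_prod_left' hY]
        congr 1 with ω
        exact lintegral_map (hF.comp measurable_prodMk_right) hX
    _ ≤ ∫⁻ _, C ∂μ := lintegral_mono hC
    _ = C := by simp

theorem IsSuperUniform.integral_mul_ite_le_of_indepFun {Ω β : Type*} [MeasurableSpace Ω]
    [MeasurableSpace β] {μ : Measure Ω} [IsProbabilityMeasure μ] {P : Ω → ℝ} {Y : Ω → β}
    (hPsu : IsSuperUniform P μ) (hPY : IndepFun P Y μ) (hP : Measurable P) (hY : Measurable Y)
    {g : β → ℝ} (hg : Measurable g) (hgY : ∀ ω, 0 ≤ g (Y ω)) {c s : ℝ} (hc : 0 < c) (hs : 0 ≤ s) :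
    ∫ ω, g (Y ω) * (if g (Y ω) / c * P ω ≤ s then 1 else 0) ∂μ ≤ c * s := by
  set F : ℝ × β → ℝ := fun q => g q.2 * (if g q.2 / c * q.1 ≤ s then 1 else 0)
  have hF : Measurable F := (hg.comp measurable_snd).mul <| Measurable.ite
    (measurableSet_le (by fun_prop) measurable_const) measurable_const measurable_const
  have hlint : ∫⁻ ω, ENNReal.ofReal (F (P ω, Y ω)) ∂μ ≤ ENNReal.ofReal (c * s) :=
    hPY.lintegral_comp_le hP hY hF.ennreal_ofReal fun ω =>
      hPsu.lintegral_ofReal_mul_ite_le (g (Y ω)) hc hs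
  have hmeas : Measurable fun ω => F (P ω, Y ω) := hF.comp (hP.prodMk hY)
  change ∫ ω, F (P ω, Y ω) ∂μ ≤ c * s
  rw [integral_eq_lintegral_of_nonneg_ae (.of_forall fun ω => by positivity [hgY ω])
    hmeas.aestronglyMeasurable]
  exact ENNReal.toReal_le_of_le_ofReal (by positivity) hlint

theorem active_pvalue_b_optimal_indep_general
    (β : ℝ) (hβ : β ∈ Ioo (0:ℝ) 1)
    (h : ℝ → ℝ) (hhm : Measurable h) (hh01 : ∀ x ∈ Icc (0:ℝ) 1, h x ∈ Icc (0:ℝ) 1)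
    (b : ℝ → ℝ)
    (H : ∀ (Ω : Type) [MeasurableSpace Ω] (μ : Measure Ω), IsProbabilityMeasure μ →
      ∀ (P Pa : Ω → ℝ), Measurable P → Measurable Pa →
        (∀ s ∈ Icc (0:ℝ) 1, μ {ω | P ω ≤ s} ≤ ENNReal.ofReal s) →
        (∀ ω, Pa ω ∈ Icc (0:ℝ) 1) → IndepFun P Pa μ →
        ∀ s ∈ Icc (0:ℝ) 1,
          ∫ ω, h (Pa ω) * (if b (Pa ω) * P ω ≤ s then (1:ℝ) else 0) ∂μ ≤ (1 - β) * s) :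
    (∀ x ∈ Icc (0:ℝ) 1, 0 < h x → h x / (1 - β) ≤ b x) ∧
    (∀ (Ω : Type) [MeasurableSpace Ω] (μ : Measure Ω), IsProbabilityMeasure μ →
      ∀ (P Pa : Ω → ℝ), Measurable P → Measurable Pa →
        (∀ s ∈ Icc (0:ℝ) 1, μ {ω | P ω ≤ s} ≤ ENNReal.ofReal s) →
        (∀ ω, Pa ω ∈ Icc (0:ℝ) 1) → IndepFun P Pa μ →
        ∀ s ∈ Icc (0:ℝ) 1,
          ∫ ω, h (Pa ω) * (if (h (Pa ω) / (1 - β)) * P ω ≤ s then (1:ℝ) else 0) ∂μ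
            ≤ (1 - β) * s) := by
  have hc : 0 < 1 - β := sub_pos.2 hβ.2
  refine ⟨fun x hx hhx => ?_, fun Ω _ μ _ P Pa hP hPa hPsu hPa01 hPPa s hs => ?_⟩
  · rw [div_le_iff₀' hc]
    exact le_mul_of_forall_integral_unitInterval_le hhx fun s hs =>
      H I volume inferInstance Subtype.val (fun _ => x) measurable_subtype_coe measurable_const
        (fun u hu => (unitInterval.volume_coe_le hu).le) (fun _ => hx)
        (indepFun_const_right _ _) s hs
  · exact IsSuperUniform.integral_mul_ite_le_of_indepFun hPsu hPPa hP hPa hhm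
      (fun ω => (hh01 _ (hPa01 ω)).1) hc hs.1

/-- Optimality of the query-branch scaling under independence: any valid `b` satisfies
`b(x) ≥ h(x)/(1-β)` wherever `h(x) > 0`, and `b(x) = h(x)/(1-β)` satisfies the constraint. -/
theorem active_pvalue_b_optimal_indep
    (β : ℝ) (hβ : β ∈ Ioo (0:ℝ) 1)
    (h : ℝ → ℝ) (hhm : Measurable h) (hh01 : ∀ x ∈ Icc (0:ℝ) 1, h x ∈ Icc (0:ℝ) 1)
    (b : ℝ → ℝ) (hbnn : ∀ x, 0 ≤ b x)
    (H : ∀ (Ω : Type) [MeasurableSpace Ω] (μ : Measure Ω), IsProbabilityMeasure μ →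
      ∀ (P Pa : Ω → ℝ), Measurable P → Measurable Pa →
        (∀ s ∈ Icc (0:ℝ) 1, μ {ω | P ω ≤ s} ≤ ENNReal.ofReal s) →
        (∀ ω, Pa ω ∈ Icc (0:ℝ) 1) → IndepFun P Pa μ →
        ∀ s ∈ Icc (0:ℝ) 1,
          ∫ ω, h (Pa ω) * (if b (Pa ω) * P ω ≤ s then (1:ℝ) else 0) ∂μ ≤ (1 - β) * s) :
    (∀ x ∈ Icc (0:ℝ) 1, 0 < h x → h x / (1 - β) ≤ b x) ∧
    (∀ (Ω : Type) [MeasurableSpace Ω] (μ : Measure Ω), IsProbabilityMeasure μ →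
      ∀ (P Pa : Ω → ℝ), Measurable P → Measurable Pa →
        (∀ s ∈ Icc (0:ℝ) 1, μ {ω | P ω ≤ s} ≤ ENNReal.ofReal s) →
        (∀ ω, Pa ω ∈ Icc (0:ℝ) 1) → IndepFun P Pa μ →
        ∀ s ∈ Icc (0:ℝ) 1,
          ∫ ω, h (Pa ω) * (if (h (Pa ω) / (1 - β)) * P ω ≤ s then (1:ℝ) else 0) ∂μ
            ≤ (1 - β) * s) :=
  active_pvalue_b_optimal_indep_general β hβ h hhm hh01 b H
end

section
/- Let E be a nonnegative random variable with E[E] ≤ 1, E^a a nonnegative random variable, U ~ Uniform(0,1) independent of (E^a, E), h : [0,∞) → (0,1), and β ∈ [0,1]. For the optimal active e-value E^active = (β/(1−h(E^a)))·1{U ≥ h(E^a)} + ((1−β)/h(E^a))·E·1{U < h(E^a)}, the conditional expectation satisfies E[E^active | E^a, E] = β + (1−β)·E, and hence E[E^active] = β + (1−β)E[E] ≤ 1. -/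
/-!
Given `(E^a, E) = (a, e)`, independence leaves `U` uniform on `[0, 1]`, so the conditional
expectation is the integral over `u` of the two-branch function. The branch `u < h a` has mass
`h a` and the branch `u ≥ h a` mass `1 - h a`; they cancel the factors `1 / h a` and
`1 / (1 - h a)`, leaving `β + (1 - β) e`. The same computation for the absolute value gives
integrability, and the tower property gives the expectation.
-/

open MeasureTheory Set ProbabilityTheory

lemma setIntegral_Icc_zero_one_ite_lt_div {a : ℝ} (ha : a ∈ Ioo (0:ℝ) 1) (c d : ℝ) :
    ∫ u in Icc (0:ℝ) 1, (if u < a then c / a else d / (1 - a)) = c + d := by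
  obtain ⟨ha0, ha1⟩ := ha
  have hlt : Iio a ∩ Icc (0:ℝ) 1 = Ico 0 a := by
    ext u; simp only [mem_inter_iff, mem_Icc, mem_Iio, mem_Ico]
    grind
  have hge : (Iio a)ᶜ ∩ Icc (0:ℝ) 1 = Icc a 1 := by
    ext u; simp only [mem_inter_iff, mem_Icc, mem_compl_iff, mem_Iio, not_lt]
    grind
  have ha1' : 1 - a ≠ 0 := by linarith
  calc ∫ u in Icc (0:ℝ) 1, (if u < a then c / a else d / (1 - a))
      = ∫ u in Icc (0:ℝ) 1, (Iio a).piecewise (fun _ => c / a) (fun _ => d / (1 - a)) u := by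
        simp only [Set.piecewise, mem_Iio]
    _ = a * (c / a) + (1 - a) * (d / (1 - a)) := by
        rw [integral_piecewise measurableSet_Iio (integrableOn_const ..) (integrableOn_const ..),
          setIntegral_const, setIntegral_const, measureReal_restrict_apply measurableSet_Iio,
          measureReal_restrict_apply measurableSet_Iio.compl, hlt, hge,
          Real.volume_real_Ico_of_le ha0.le, Real.volume_real_Icc_of_le ha1.le, sub_zero,
          smul_eq_mul, smul_eq_mul]
    _ = c + d := by rw [mul_div_cancel₀ _ ha0.ne', mul_div_cancel₀ _ ha1']

lemma integrable_ite_lt {μ : Measure ℝ} [IsFiniteMeasure μ] (a p q : ℝ) :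
    Integrable (fun u : ℝ => if u < a then p else q) μ :=
  show Integrable ((Iio a).piecewise (fun _ => p) (fun _ => q)) μ from
    Integrable.piecewise measurableSet_Iio (integrable_const p).integrableOn
      (integrable_const q).integrableOn

namespace ProbabilityTheory

variable {Ω α β : Type*} {mΩ : MeasurableSpace Ω} {mα : MeasurableSpace α}
  {mβ : MeasurableSpace β} {μ : Measure Ω} [IsFiniteMeasure μ] {X : Ω → α} {Y : Ω → β}
  {F : Type*} [NormedAddCommGroup F]

lemma IndepFun.condDistrib_ae_eq_const [StandardBorelSpace β] [Nonempty β]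
    (hXY : X ⟂ᵢ[μ] Y) (hX : AEMeasurable X μ) (hY : AEMeasurable Y μ) :
    condDistrib Y X μ =ᵐ[μ.map X] Kernel.const α (μ.map Y) :=
  condDistrib_ae_eq_of_measure_eq_compProd X hY
    (by rw [Measure.compProd_const, hXY.map_prod_eq_prod_map_map hX hY])

theorem IndepFun.condExp_ae_eq_integral_map [StandardBorelSpace β] [Nonempty β]
    [NormedSpace ℝ F] [CompleteSpace F]
    (hXY : X ⟂ᵢ[μ] Y) (hX : Measurable X) (hY : AEMeasurable Y μ) {f : α × β → F}
    (hf : StronglyMeasurable f) (hf_int : Integrable (fun ω => f (X ω, Y ω)) μ) :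
    μ[fun ω => f (X ω, Y ω) | mα.comap X] =ᵐ[μ] fun ω => ∫ y, f (X ω, y) ∂(μ.map Y) := by
  filter_upwards [condExp_prod_ae_eq_integral_condDistrib hX hY hf hf_int,
    ae_of_ae_map hX.aemeasurable (hXY.condDistrib_ae_eq_const hX.aemeasurable hY)] with ω h1 h2
  rw [h1, h2, Kernel.const_apply]

lemma IndepFun.integrable_comp_iff (hXY : X ⟂ᵢ[μ] Y) (hX : AEMeasurable X μ)
    (hY : AEMeasurable Y μ) {f : α × β → F}
    (hf : AEStronglyMeasurable f ((μ.map X).prod (μ.map Y))) :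
    Integrable (fun ω => f (X ω, Y ω)) μ ↔ Integrable f ((μ.map X).prod (μ.map Y)) := by
  rw [← hXY.map_prod_eq_prod_map_map hX hY] at hf ⊢
  exact (integrable_map_measure hf (hX.prodMk hY)).symm

end ProbabilityTheory

/-- The optimal active e-value as a function of `((E^a, E), U)`. -/
noncomputable def activeEValue (h : ℝ → ℝ) (β : ℝ) (p : (ℝ × ℝ) × ℝ) : ℝ :=
  if p.2 < h p.1.1 then ((1 - β) / h p.1.1) * p.1.2 else β / (1 - h p.1.1)

section activeEValue

variable {h : ℝ → ℝ} {β : ℝ}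

lemma measurable_activeEValue (hh : Measurable h) : Measurable (activeEValue h β) :=
  Measurable.ite (measurableSet_lt measurable_snd (hh.comp (measurable_fst.comp measurable_fst)))
    (by fun_prop) (by fun_prop)

lemma integral_activeEValue (hh : ∀ x, h x ∈ Ioo (0:ℝ) 1) (y : ℝ × ℝ) :
    ∫ u in Icc (0:ℝ) 1, activeEValue h β (y, u) = β + (1 - β) * y.2 := by
  simp only [activeEValue, div_mul_eq_mul_div]
  rw [setIntegral_Icc_zero_one_ite_lt_div (hh y.1), add_comm]

lemma norm_activeEValue (hh : ∀ x, h x ∈ Ioo (0:ℝ) 1) (y : ℝ × ℝ) (u : ℝ) :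
    ‖activeEValue h β (y, u)‖
      = if u < h y.1 then |(1 - β) * y.2| / h y.1 else |β| / (1 - h y.1) := by
  obtain ⟨h0, h1⟩ := hh y.1
  simp only [activeEValue, div_mul_eq_mul_div]
  split_ifs
  · rw [Real.norm_eq_abs, abs_div, abs_of_pos h0]
  · rw [Real.norm_eq_abs, abs_div, abs_of_pos (sub_pos.mpr h1)]

lemma integrable_activeEValue_comp {Ω : Type*} [MeasurableSpace Ω] {μ : Measure Ω}
    [IsProbabilityMeasure μ] {Y : Ω → ℝ × ℝ} {U : Ω → ℝ} (hY : Measurable Y) (hU : Measurable U)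
    (hY2 : Integrable (fun ω => (Y ω).2) μ) (hUnif : μ.map U = volume.restrict (Icc (0:ℝ) 1))
    (hIndep : Y ⟂ᵢ[μ] U) (hhm : Measurable h) (hh : ∀ x, h x ∈ Ioo (0:ℝ) 1) :
    Integrable (fun ω => activeEValue h β (Y ω, U ω)) μ := by
  have hf : AEStronglyMeasurable (activeEValue h β) ((μ.map Y).prod (μ.map U)) :=
    (measurable_activeEValue hhm).aestronglyMeasurable
  rw [hIndep.integrable_comp_iff hY.aemeasurable hU.aemeasurable hf, integrable_prod_iff hf, hUnif]
  refine ⟨ae_of_all _ fun y => ?_, ?_⟩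
  · exact integrable_ite_lt (h y.1) ((1 - β) / h y.1 * y.2) (β / (1 - h y.1))
  · simp only [norm_activeEValue hh, setIntegral_Icc_zero_one_ite_lt_div (hh _)]
    rw [integrable_map_measure (by fun_prop) hY.aemeasurable]
    exact (hY2.const_mul _).abs.add (integrable_const _)

end activeEValue

theorem active_evalue_conditional_expectation_general
    {Ω : Type*} [MeasurableSpace Ω] (μ : Measure Ω) [IsProbabilityMeasure μ]
    (E Ea U : Ω → ℝ) (hEm : Measurable E) (hEam : Measurable Ea) (hUm : Measurable U)
    (hEint : Integrable E μ) (hE1 : ∫ ω, E ω ∂μ ≤ 1)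
    (hUnif : μ.map U = volume.restrict (Icc (0:ℝ) 1))
    (hIndep : IndepFun U (fun ω => (Ea ω, E ω)) μ)
    (h : ℝ → ℝ) (hhm : Measurable h) (hh : ∀ x, h x ∈ Ioo (0:ℝ) 1)
    (β : ℝ) (hβ : β ∈ Icc (0:ℝ) 1) :
    (μ[(fun ω => if U ω < h (Ea ω) then ((1 - β) / h (Ea ω)) * E ω
            else β / (1 - h (Ea ω)))
        | MeasurableSpace.comap (fun ω => (Ea ω, E ω)) inferInstance]
      =ᵐ[μ] fun ω => β + (1 - β) * E ω) ∧
    (∫ ω, (if U ω < h (Ea ω) then ((1 - β) / h (Ea ω)) * E ω else β / (1 - h (Ea ω))) ∂μ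
        = β + (1 - β) * ∫ ω, E ω ∂μ) ∧
    (∫ ω, (if U ω < h (Ea ω) then ((1 - β) / h (Ea ω)) * E ω else β / (1 - h (Ea ω))) ∂μ
        ≤ 1) := by
  set Y : Ω → ℝ × ℝ := fun ω => (Ea ω, E ω)
  have hY : Measurable Y := hEam.prodMk hEm
  change μ[fun ω => activeEValue h β (Y ω, U ω) | _] =ᵐ[μ] _ ∧
    ∫ ω, activeEValue h β (Y ω, U ω) ∂μ = _ ∧ ∫ ω, activeEValue h β (Y ω, U ω) ∂μ ≤ 1
  have hint := integrable_activeEValue_comp hY hUm hEint hUnif hIndep.symm hhm hh (β := β)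
  have hcond : μ[fun ω => activeEValue h β (Y ω, U ω) | MeasurableSpace.comap Y inferInstance]
      =ᵐ[μ] fun ω => β + (1 - β) * E ω := by
    refine (hIndep.symm.condExp_ae_eq_integral_map hY hUm.aemeasurable
      (measurable_activeEValue hhm).stronglyMeasurable hint).trans (ae_of_all _ fun ω => ?_)
    rw [hUnif]
    exact integral_activeEValue hh (Y ω)
  have hmean : ∫ ω, activeEValue h β (Y ω, U ω) ∂μ = β + (1 - β) * ∫ ω, E ω ∂μ := by
    rw [← integral_condExp hY.comap_le, integral_congr_ae hcond,
      integral_add (integrable_const β) (hEint.const_mul _), integral_const, integral_const_mul,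
      probReal_univ, one_smul]
  refine ⟨hcond, hmean, hmean ▸ ?_⟩
  linarith [mul_le_of_le_one_right (sub_nonneg.mpr hβ.2) hE1]

/-- Tightness of the optimal active e-value: its conditional expectation given `(E^a, E)` is
`β + (1-β)E`, hence its expectation equals `β + (1-β)𝔼[E] ≤ 1`. -/
theorem active_evalue_conditional_expectation
    {Ω : Type*} [MeasurableSpace Ω] (μ : Measure Ω) [IsProbabilityMeasure μ]
    (E Ea U : Ω → ℝ) (hEm : Measurable E) (hEam : Measurable Ea) (hUm : Measurable U)
    (hEnn : ∀ ω, 0 ≤ E ω) (hEann : ∀ ω, 0 ≤ Ea ω)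
    (hEint : Integrable E μ) (hE1 : ∫ ω, E ω ∂μ ≤ 1)
    (hUnif : μ.map U = volume.restrict (Icc (0:ℝ) 1))
    (hIndep : IndepFun U (fun ω => (Ea ω, E ω)) μ)
    (h : ℝ → ℝ) (hhm : Measurable h) (hh : ∀ x, h x ∈ Ioo (0:ℝ) 1)
    (β : ℝ) (hβ : β ∈ Icc (0:ℝ) 1) :
    (μ[(fun ω => if U ω < h (Ea ω) then ((1 - β) / h (Ea ω)) * E ω
            else β / (1 - h (Ea ω)))
        | MeasurableSpace.comap (fun ω => (Ea ω, E ω)) inferInstance]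
      =ᵐ[μ] fun ω => β + (1 - β) * E ω) ∧
    (∫ ω, (if U ω < h (Ea ω) then ((1 - β) / h (Ea ω)) * E ω else β / (1 - h (Ea ω))) ∂μ
        = β + (1 - β) * ∫ ω, E ω ∂μ) ∧
    (∫ ω, (if U ω < h (Ea ω) then ((1 - β) / h (Ea ω)) * E ω else β / (1 - h (Ea ω))) ∂μ
        ≤ 1) :=
  active_evalue_conditional_expectation_general μ E Ea U hEm hEam hUm hEint hE1 hUnif hIndep h hhm
    hh β hβ
end
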